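/- Every 4×4 unitary matrix U admits a factorization U = K₁ · e^{izI₄} · e^{iwH̃} · K₂, where z, w are real numbers, H̃ := diag(3, −1, −1, 3), I₄ is the 4×4 identity, and K₁, K₂ belong to the group G := {K ∈ U(4) : K J Kᵀ = J}, with J the 4×4 matrix having J(1,4) = 1, J(2,3) = −1, J(3,2) = 1, J(4,1) = −1 and all other entries zero. -/

import Mathlib

/-!
For unitary `U`, the matrix `N = U J Uᵀ J⁻¹` is unitary and satisfies `N J = J Nᵀ`, so it commutes
with the antiunitary map `θ v = J v̄`. Since `J` is antisymmetric, `θ v ⊥ v`; hence an eigenvector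
`k` of `N` comes with a second one, `θ k`, orthogonal to it and with the same eigenvalue (Kramers
pairing). This yields an orthonormal eigenbasis `k₁, k₂, θ k₂, -θ k₁`, whose matrix `K` lies in `G`
and gives the normal form `U J Uᵀ = K E J Kᵀ` with `E = diag(c, d, d, c)`, `|c| = |d| = 1`.
A square root `D = diag(a, b, b, a)` of `E` commutes with `J` and is exactly `e^{izI} e^{iwH̃}` for
suitable real `z, w`; then `K₂ = D⁻¹ K⁻¹ U` satisfies `K₂ J K₂ᵀ = J` and `U = K D K₂`.
-/

open Matrix Complex NormedSpace

noncomputable section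

/-- The 4×4 matrix J with J(1,4)=1, J(2,3)=−1, J(3,2)=1, J(4,1)=−1. -/
def J4 : Matrix (Fin 4) (Fin 4) ℂ := !![0,0,0,1; 0,0,-1,0; 0,1,0,0; -1,0,0,0]

/-- H̃ = diag(3,−1,−1,3), the Ising coupling H_zz on the symmetric sector. -/
def Htilde : Matrix (Fin 4) (Fin 4) ℂ := Matrix.diagonal ![3, -1, -1, 3]

section UnitaryEigen

open scoped ComplexOrder

variable {n : Type*} [Fintype n] {N : Matrix n n ℂ} {c : ℂ} {x : n → ℂ}

lemma exists_smul_star_dotProduct_eq_one (hx : x ≠ 0) :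
    ∃ t : ℂ, star (t • x) ⬝ᵥ (t • x) = 1 := by
  obtain ⟨r, hr, hrx⟩ := RCLike.pos_iff_exists_ofReal.mp (dotProduct_star_self_pos_iff.mpr hx)
  replace hrx : (r : ℂ) = star x ⬝ᵥ x := hrx
  refine ⟨((√r)⁻¹ : ℝ), ?_⟩
  rw [star_smul, smul_dotProduct, dotProduct_smul, ← hrx, smul_eq_mul, smul_eq_mul,
    Complex.star_def, Complex.conj_ofReal]
  have hsqrt : (√r)⁻¹ * (√r)⁻¹ * r = 1 := by
    rw [← mul_inv, Real.mul_self_sqrt hr.le, inv_mul_cancel₀ hr.ne']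
  rw [← mul_assoc]
  exact_mod_cast hsqrt

lemma exists_unit_eigenvector_mem (N : Matrix n n ℂ) {W : Submodule ℂ (n → ℂ)} (hW : W ≠ ⊥)
    (hNW : ∀ x ∈ W, N *ᵥ x ∈ W) :
    ∃ (c : ℂ) (x : n → ℂ), x ∈ W ∧ star x ⬝ᵥ x = 1 ∧ N *ᵥ x = c • x := by
  have := Submodule.nontrivial_iff_ne_bot.mpr hW
  obtain ⟨c, hc⟩ := Module.End.exists_eigenvalue ((mulVecLin N).restrict hNW)
  obtain ⟨⟨v, hvW⟩, hv⟩ := hc.exists_hasEigenvector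
  have hv0 : v ≠ 0 := fun h => hv.2 (Subtype.ext h)
  have hNv : N *ᵥ v = c • v := congrArg Subtype.val hv.apply_eq_smul
  obtain ⟨t, ht⟩ := exists_smul_star_dotProduct_eq_one hv0
  exact ⟨c, t • v, W.smul_mem t hvW, ht, by rw [mulVec_smul, hNv, smul_comm]⟩

variable [DecidableEq n]

lemma star_mul_self_eq_one_of_mulVec_eq_smul (hN : N ∈ unitaryGroup n ℂ) (hx : x ≠ 0)
    (h : N *ᵥ x = c • x) : star c * c = 1 := by
  have hnorm : star (N *ᵥ x) ⬝ᵥ (N *ᵥ x) = star x ⬝ᵥ x := by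
    rw [star_mulVec, dotProduct_mulVec, vecMul_vecMul, ← star_eq_conjTranspose,
      mem_unitaryGroup_iff'.mp hN, vecMul_one]
  rw [h, star_smul, smul_dotProduct, dotProduct_smul, smul_smul, smul_eq_mul] at hnorm
  exact mul_right_cancel₀ (dotProduct_star_self_pos_iff.mpr hx).ne' (hnorm.trans (one_mul _).symm)

lemma conjTranspose_mulVec_of_mulVec_eq_smul (hN : N ∈ unitaryGroup n ℂ) (hc : star c * c = 1)
    (h : N *ᵥ x = c • x) : Nᴴ *ᵥ x = star c • x := by
  have hx : Nᴴ *ᵥ (N *ᵥ x) = x := by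
    rw [mulVec_mulVec, ← star_eq_conjTranspose, mem_unitaryGroup_iff'.mp hN, one_mulVec]
  rw [h, mulVec_smul] at hx
  calc Nᴴ *ᵥ x = (star c * c) • (Nᴴ *ᵥ x) := by rw [hc, one_smul]
    _ = star c • x := by rw [mul_smul, hx]

lemma star_dotProduct_mulVec_eq_zero (hN : N ∈ unitaryGroup n ℂ) {k : n → ℂ}
    (hc : star c * c = 1) (hk : N *ᵥ k = c • k) (hx : star k ⬝ᵥ x = 0) :
    star k ⬝ᵥ (N *ᵥ x) = 0 := by
  rw [dotProduct_mulVec, ← conjTranspose_conjTranspose N, ← star_mulVec,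
    conjTranspose_mulVec_of_mulVec_eq_smul hN hc hk, star_smul, star_star, smul_dotProduct, hx,
    smul_zero]

lemma exists_unit_eigenvector_orthogonal (hN : N ∈ unitaryGroup n ℂ)
    (hn : 2 < Fintype.card n) {u v : n → ℂ} {a b : ℂ} (ha : star a * a = 1)
    (hb : star b * b = 1) (hu : N *ᵥ u = a • u) (hv : N *ᵥ v = b • v) :
    ∃ (d : ℂ) (x : n → ℂ), star x ⬝ᵥ x = 1 ∧ star u ⬝ᵥ x = 0 ∧ star v ⬝ᵥ x = 0 ∧
      N *ᵥ x = d • x := by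
  set W := LinearMap.ker ((dotProductBilin ℂ ℂ (star u)).prod (dotProductBilin ℂ ℂ (star v)))
  have hmem : ∀ x, x ∈ W ↔ star u ⬝ᵥ x = 0 ∧ star v ⬝ᵥ x = 0 := fun x => by simp [W]
  have hW : W ≠ ⊥ := LinearMap.ker_ne_bot_of_finrank_lt (by simpa using hn)
  obtain ⟨d, x, hxW, hx, hNx⟩ := exists_unit_eigenvector_mem N hW fun y hy => by
    rw [hmem] at hy ⊢
    exact ⟨star_dotProduct_mulVec_eq_zero hN ha hu hy.1,
      star_dotProduct_mulVec_eq_zero hN hb hv hy.2⟩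
  obtain ⟨hux, hvx⟩ := (hmem x).mp hxW
  exact ⟨d, x, hx, hux, hvx, hNx⟩

end UnitaryEigen

lemma J4_mul_J4 : J4 * J4 = -1 := by
  ext i j
  fin_cases i <;> fin_cases j <;> simp [J4, mul_apply, Fin.sum_univ_four, one_apply]

lemma J4_transpose : J4ᵀ = -J4 := by
  ext i j
  fin_cases i <;> fin_cases j <;> simp [J4]

lemma J4_conjTranspose : J4ᴴ = -J4 := by
  ext i j
  fin_cases i <;> fin_cases j <;> simp [J4]

lemma J4_mem_unitaryGroup : J4 ∈ unitaryGroup (Fin 4) ℂ := by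
  rw [mem_unitaryGroup_iff', star_eq_conjTranspose, J4_conjTranspose, neg_mul, J4_mul_J4, neg_neg]

lemma J4_mul_diagonal (a b : ℂ) :
    J4 * diagonal ![a, b, b, a] = diagonal ![a, b, b, a] * J4 := by
  ext i j
  fin_cases i <;> fin_cases j <;> simp [J4, mul_apply, Fin.sum_univ_four]

def theta (v : Fin 4 → ℂ) : Fin 4 → ℂ := J4 *ᵥ star v

lemma star_theta_dotProduct_theta (x y : Fin 4 → ℂ) :
    star (theta x) ⬝ᵥ theta y = star y ⬝ᵥ x := by
  simp [theta, J4, mulVec, dotProduct, Fin.sum_univ_four]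
  ring

lemma star_theta_dotProduct_comm (x y : Fin 4 → ℂ) :
    star (theta x) ⬝ᵥ y = -(star (theta y) ⬝ᵥ x) := by
  simp [theta, J4, dotProduct, Fin.sum_univ_four]
  ring

lemma star_dotProduct_theta_self (v : Fin 4 → ℂ) : star v ⬝ᵥ theta v = 0 := by
  simp [theta, J4, mulVec, dotProduct, Fin.sum_univ_four]
  ring

lemma star_theta_dotProduct_self (v : Fin 4 → ℂ) : star (theta v) ⬝ᵥ v = 0 := by
  rw [star_dotProduct, star_dotProduct_theta_self, star_zero]

lemma mulVec_theta_of_mulVec_eq_smul {N : Matrix (Fin 4) (Fin 4) ℂ}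
    (hN : N ∈ unitaryGroup (Fin 4) ℂ) (hNJ : N * J4 = J4 * Nᵀ) {c : ℂ} {x : Fin 4 → ℂ}
    (hc : star c * c = 1) (hx : N *ᵥ x = c • x) : N *ᵥ theta x = c • theta x := by
  have hNx : Nᵀ *ᵥ star x = c • star x := by
    rw [mulVec_transpose, ← conjTranspose_conjTranspose N, ← star_mulVec,
      conjTranspose_mulVec_of_mulVec_eq_smul hN hc hx, star_smul, star_star]
  rw [theta, mulVec_mulVec, hNJ, ← mulVec_mulVec, hNx, mulVec_smul]

/-- The column order and the sign make `K J = J K̄`, so `K ∈ G` as soon as `K` is unitary. -/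
def symplecticFrame (k₁ k₂ : Fin 4 → ℂ) : Matrix (Fin 4) (Fin 4) ℂ :=
  (of ![k₁, k₂, theta k₂, -theta k₁])ᵀ

section Frame

variable {k₁ k₂ : Fin 4 → ℂ}

lemma symplecticFrame_mem_unitaryGroup (h₁ : star k₁ ⬝ᵥ k₁ = 1) (h₂ : star k₂ ⬝ᵥ k₂ = 1)
    (h₁₂ : star k₁ ⬝ᵥ k₂ = 0) (hθ₁₂ : star (theta k₁) ⬝ᵥ k₂ = 0) :
    symplecticFrame k₁ k₂ ∈ unitaryGroup (Fin 4) ℂ := by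
  have h₂₁ : star k₂ ⬝ᵥ k₁ = 0 := by rw [star_dotProduct, h₁₂, star_zero]
  have hθ₂₁ : star (theta k₂) ⬝ᵥ k₁ = 0 := by rw [star_theta_dotProduct_comm, hθ₁₂, neg_zero]
  have h₁θ₂ : star k₁ ⬝ᵥ theta k₂ = 0 := by rw [star_dotProduct, hθ₂₁, star_zero]
  have h₂θ₁ : star k₂ ⬝ᵥ theta k₁ = 0 := by rw [star_dotProduct, hθ₁₂, star_zero]
  rw [mem_unitaryGroup_iff', star_eq_conjTranspose]
  ext i j
  change star (![k₁, k₂, theta k₂, -theta k₁] i) ⬝ᵥ ![k₁, k₂, theta k₂, -theta k₁] j = _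
  fin_cases i <;> fin_cases j <;>
    simp [star_theta_dotProduct_theta, star_dotProduct_theta_self, star_theta_dotProduct_self, *]

lemma J4_mul_symplecticFrame_transpose :
    J4 * (symplecticFrame k₁ k₂)ᵀ = (symplecticFrame k₁ k₂)ᴴ * J4 := by
  ext i j
  fin_cases i <;> fin_cases j <;>
    simp [symplecticFrame, J4, theta, mul_apply, Fin.sum_univ_four, vecHead, vecTail]

lemma symplecticFrame_mul_J4_mul_transpose (hK : symplecticFrame k₁ k₂ ∈ unitaryGroup (Fin 4) ℂ) :
    symplecticFrame k₁ k₂ * J4 * (symplecticFrame k₁ k₂)ᵀ = J4 := by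
  rw [Matrix.mul_assoc, J4_mul_symplecticFrame_transpose, ← Matrix.mul_assoc,
    ← star_eq_conjTranspose, mem_unitaryGroup_iff.mp hK, Matrix.one_mul]

lemma mul_symplecticFrame {N : Matrix (Fin 4) (Fin 4) ℂ} {c d : ℂ} (h₁ : N *ᵥ k₁ = c • k₁)
    (h₂ : N *ᵥ k₂ = d • k₂) (hθ₁ : N *ᵥ theta k₁ = c • theta k₁)
    (hθ₂ : N *ᵥ theta k₂ = d • theta k₂) :
    N * symplecticFrame k₁ k₂ = symplecticFrame k₁ k₂ * diagonal ![c, d, d, c] := by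
  ext i j
  rw [mul_diagonal]
  change (N *ᵥ ![k₁, k₂, theta k₂, -theta k₁] j) i = ![k₁, k₂, theta k₂, -theta k₁] j i * _
  fin_cases j <;> simp [h₁, h₂, hθ₁, hθ₂, mulVec_neg, mul_comm]

end Frame

lemma exists_symplectic_eigenbasis {N : Matrix (Fin 4) (Fin 4) ℂ}
    (hN : N ∈ unitaryGroup (Fin 4) ℂ) (hNJ : N * J4 = J4 * Nᵀ) :
    ∃ K ∈ unitaryGroup (Fin 4) ℂ, K * J4 * Kᵀ = J4 ∧
      ∃ c d : ℂ, star c * c = 1 ∧ star d * d = 1 ∧ N * K = K * diagonal ![c, d, d, c] := by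
  obtain ⟨c, k₁, -, hk₁, hNk₁⟩ := exists_unit_eigenvector_mem N top_ne_bot fun _ _ => trivial
  have hc : star c * c = 1 := star_mul_self_eq_one_of_mulVec_eq_smul hN
    (fun h => by simp [h] at hk₁) hNk₁
  have hNθk₁ := mulVec_theta_of_mulVec_eq_smul hN hNJ hc hNk₁
  obtain ⟨d, k₂, hk₂, h₁₂, hθ₁₂, hNk₂⟩ :=
    exists_unit_eigenvector_orthogonal hN (by simp) hc hc hNk₁ hNθk₁
  have hd : star d * d = 1 := star_mul_self_eq_one_of_mulVec_eq_smul hN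
    (fun h => by simp [h] at hk₂) hNk₂
  have hK := symplecticFrame_mem_unitaryGroup hk₁ hk₂ h₁₂ hθ₁₂
  exact ⟨symplecticFrame k₁ k₂, hK, symplecticFrame_mul_J4_mul_transpose hK, c, d, hc, hd,
    mul_symplecticFrame hNk₁ hNk₂ hNθk₁ (mulVec_theta_of_mulVec_eq_smul hN hNJ hd hNk₂)⟩

def phase (z w : ℝ) : Matrix (Fin 4) (Fin 4) ℂ :=
  NormedSpace.exp ((I * z) • (1 : Matrix (Fin 4) (Fin 4) ℂ)) * NormedSpace.exp ((I * w) • Htilde)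

lemma phase_eq_diagonal (z w : ℝ) :
    phase z w = diagonal ![Complex.exp (I * (z + 3 * w)), Complex.exp (I * (z - w)),
      Complex.exp (I * (z - w)), Complex.exp (I * (z + 3 * w))] := by
  rw [phase, smul_one_eq_diagonal, Htilde, ← diagonal_smul, Matrix.exp_diagonal,
    Matrix.exp_diagonal, diagonal_mul_diagonal]
  congr 1
  ext i
  fin_cases i <;> simp [← Complex.exp_eq_exp_ℂ, ← Complex.exp_add] <;> ring_nf

lemma diagonal_mem_unitaryGroup {n : Type*} [Fintype n] [DecidableEq n] {v : n → ℂ}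
    (hv : ∀ i, star (v i) * v i = 1) : diagonal v ∈ unitaryGroup n ℂ := by
  rw [mem_unitaryGroup_iff', star_eq_conjTranspose, diagonal_conjTranspose,
    diagonal_mul_diagonal, ← diagonal_one]
  exact congrArg diagonal (funext hv)

lemma phase_mem_unitaryGroup (z w : ℝ) : phase z w ∈ unitaryGroup (Fin 4) ℂ := by
  rw [phase_eq_diagonal]
  refine diagonal_mem_unitaryGroup fun i => ?_
  fin_cases i <;> simp [← Complex.exp_conj, ← Complex.exp_add, map_ofNat]

lemma phase_mul_J4 (z w : ℝ) : phase z w * J4 = J4 * phase z w := by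
  rw [phase_eq_diagonal, J4_mul_diagonal]

lemma transpose_star_phase (z w : ℝ) : (star (phase z w))ᵀ = star (phase z w) := by
  rw [phase_eq_diagonal, star_eq_conjTranspose, diagonal_conjTranspose, diagonal_transpose]

lemma exp_arg_mul_I_of_star_mul_self_eq_one {c : ℂ} (hc : star c * c = 1) :
    Complex.exp (c.arg * I) = c := by
  have hnorm : ‖c‖ = 1 := by
    rw [Complex.star_def, Complex.conj_mul'] at hc
    exact (pow_eq_one_iff_of_nonneg (norm_nonneg c) two_ne_zero).mp (by exact_mod_cast hc)
  simpa [hnorm] using Complex.norm_mul_exp_arg_mul_I c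

lemma exists_phase_mul_self_eq {c d : ℂ} (hc : star c * c = 1) (hd : star d * d = 1) :
    ∃ z w : ℝ, phase z w * phase z w = diagonal ![c, d, d, c] := by
  obtain ⟨α, rfl⟩ : ∃ α : ℝ, Complex.exp (α * I) = c :=
    ⟨c.arg, exp_arg_mul_I_of_star_mul_self_eq_one hc⟩
  obtain ⟨β, rfl⟩ : ∃ β : ℝ, Complex.exp (β * I) = d :=
    ⟨d.arg, exp_arg_mul_I_of_star_mul_self_eq_one hd⟩
  refine ⟨(α + 3 * β) / 8, (α - β) / 8, ?_⟩
  rw [phase_eq_diagonal, diagonal_mul_diagonal]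
  congr 1
  ext i
  fin_cases i <;> simp only [Fin.zero_eta, Fin.mk_one, Fin.reduceFinMk, cons_val,
    ← Complex.exp_add] <;> congr 1 <;> push_cast <;> ring

lemma exists_youla_form {U : Matrix (Fin 4) (Fin 4) ℂ} (hU : U ∈ unitaryGroup (Fin 4) ℂ) :
    ∃ K ∈ unitaryGroup (Fin 4) ℂ, K * J4 * Kᵀ = J4 ∧ ∃ c d : ℂ, star c * c = 1 ∧
      star d * d = 1 ∧ U * J4 * Uᵀ = K * diagonal ![c, d, d, c] * J4 * Kᵀ := by
  have hJ := J4_mem_unitaryGroup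
  set N := U * J4 * Uᵀ * star J4
  have hN : N ∈ unitaryGroup (Fin 4) ℂ :=
    mul_mem (mul_mem (mul_mem hU hJ) (transpose_mem_unitaryGroup_iff.mpr hU)) (Unitary.star_mem hJ)
  have hN_J4 : N * J4 = U * J4 * Uᵀ := by
    rw [Matrix.mul_assoc _ (star J4), mem_unitaryGroup_iff'.mp hJ, Matrix.mul_one]
  have hNJ : N * J4 = J4 * Nᵀ := by
    have hJJ : ∀ X, J4 * (J4 * X) = -X := fun X => by
      rw [← Matrix.mul_assoc, J4_mul_J4, Matrix.neg_mul, Matrix.one_mul]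
    simp only [N, star_eq_conjTranspose, J4_conjTranspose, transpose_mul, transpose_neg,
      J4_transpose, transpose_transpose, Matrix.mul_assoc, Matrix.neg_mul, Matrix.mul_neg, hJJ,
      J4_mul_J4, Matrix.mul_one, neg_neg]
  obtain ⟨K, hK, hKJ, c, d, hc, hd, hNK⟩ := exists_symplectic_eigenbasis hN hNJ
  refine ⟨K, hK, hKJ, c, d, hc, hd, ?_⟩
  calc U * J4 * Uᵀ = N * (K * J4 * Kᵀ) := by rw [hKJ, hN_J4]
    _ = K * diagonal ![c, d, d, c] * J4 * Kᵀ := by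
      rw [← Matrix.mul_assoc, ← Matrix.mul_assoc, hNK]

lemma star_mul_star_mul_mul_mul_transpose {n : Type*} [Fintype n] [DecidableEq n]
    {J U K D : Matrix n n ℂ} (hK : K ∈ unitaryGroup n ℂ) (hD : D ∈ unitaryGroup n ℂ)
    (hDJ : D * J = J * D) (hDT : (star D)ᵀ = star D)
    (hUJU : U * J * Uᵀ = K * (D * D) * J * Kᵀ) :
    star D * star K * U * J * (star D * star K * U)ᵀ = J := by
  have hKT : Kᵀ * (star K)ᵀ = 1 := by
    rw [← transpose_mul, mem_unitaryGroup_iff'.mp hK, transpose_one]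
  calc star D * star K * U * J * (star D * star K * U)ᵀ
      = star D * star K * (U * J * Uᵀ) * (star K)ᵀ * star D := by
        simp only [transpose_mul, hDT, Matrix.mul_assoc]
    _ = star D * (star K * K) * D * (D * J) * (Kᵀ * (star K)ᵀ) * star D := by
        rw [hUJU]
        simp only [Matrix.mul_assoc]
    _ = (star D * D) * J * (D * star D) := by
        rw [mem_unitaryGroup_iff'.mp hK, hKT, hDJ]
        simp only [Matrix.mul_assoc, Matrix.mul_one]
    _ = J := by
        rw [mem_unitaryGroup_iff'.mp hD, mem_unitaryGroup_iff.mp hD, Matrix.one_mul,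
          Matrix.mul_one]

/-- every 4×4 unitary U factors as U = K₁·e^{izI₄}·e^{iwH̃}·K₂ with
z, w real and K₁, K₂ in the group {K ∈ U(4) : K J Kᵀ = J} (conjugate to Sp(2)). -/
theorem statement15 (U : Matrix (Fin 4) (Fin 4) ℂ)
    (hU : U ∈ Matrix.unitaryGroup (Fin 4) ℂ) :
    ∃ (z w : ℝ) (K1 K2 : Matrix (Fin 4) (Fin 4) ℂ),
      K1 ∈ Matrix.unitaryGroup (Fin 4) ℂ ∧ K1 * J4 * K1ᵀ = J4 ∧
      K2 ∈ Matrix.unitaryGroup (Fin 4) ℂ ∧ K2 * J4 * K2ᵀ = J4 ∧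
      U = K1 * NormedSpace.exp ((Complex.I * (z : ℂ)) • (1 : Matrix (Fin 4) (Fin 4) ℂ))
            * NormedSpace.exp ((Complex.I * (w : ℂ)) • Htilde) * K2 := by
  obtain ⟨K, hK, hKJ, c, d, hc, hd, hUJU⟩ := exists_youla_form hU
  obtain ⟨z, w, hDD⟩ := exists_phase_mul_self_eq hc hd
  have hD := phase_mem_unitaryGroup z w
  refine ⟨z, w, K, star (phase z w) * star K * U, hK, hKJ,
    mul_mem (mul_mem (Unitary.star_mem hD) (Unitary.star_mem hK)) hU,
    star_mul_star_mul_mul_mul_transpose hK hD (phase_mul_J4 z w) (transpose_star_phase z w)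
      (hDD ▸ hUJU), ?_⟩
  rw [Matrix.mul_assoc K, ← phase, Matrix.mul_assoc, Matrix.mul_assoc,
    ← Matrix.mul_assoc (phase z w), mem_unitaryGroup_iff.mp hD, Matrix.one_mul,
    ← Matrix.mul_assoc, mem_unitaryGroup_iff.mp hK, Matrix.one_mul]
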